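/- Define s : ℕ → ℚ by s(1) = 0, s(2n) = a(n), s(2n+1) = −a(n) for n ≥ 1. Then s is a bijection from the positive integers onto the rational numbers. -/

import Mathlib

/-!
Every `n ≥ 2` is `2m` or `2m + 1` with `1 ≤ m < n`, and by induction `a` is positive with
`1 < a (2m)` and `a (2m + 1) < 1`. So the value `a n` tells whether `n` is `1`, even or odd,
and the recursion can be undone: this gives injectivity. Conversely `p / d` is reached from
`(p - d) / d` or `p / (d - p)`, so surjectivity follows by induction on `p + d`.
Finally `s` sends `1`, the even and the odd integers to `0`, the positive and the negative
rationals, and on the latter two it is `a` and `-a`.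
-/

theorem Nat.eq_one_or_exists_eq_two_mul_or_two_mul_add_one {n : ℕ} (hn : 1 ≤ n) :
    n = 1 ∨ ∃ m, 1 ≤ m ∧ m < n ∧ (n = 2 * m ∨ n = 2 * m + 1) := by
  rcases eq_or_lt_of_le hn with h | h
  · exact .inl h.symm
  · exact .inr ⟨n / 2, by omega, by omega, by omega⟩

structure SuccRecipRec (a : ℕ → ℚ) : Prop where
  one : a 1 = 1
  two_mul : ∀ n, 1 ≤ n → a (2 * n) = a n + 1
  two_mul_add_one : ∀ n, 1 ≤ n → a (2 * n + 1) = 1 / a (2 * n)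

namespace SuccRecipRec

variable {a : ℕ → ℚ}

theorem pos (ha : SuccRecipRec a) {n : ℕ} (hn : 1 ≤ n) : 0 < a n := by
  induction n using Nat.strong_induction_on with
  | _ n ih =>
    rcases Nat.eq_one_or_exists_eq_two_mul_or_two_mul_add_one hn with rfl | ⟨m, hm, hmn, rfl | rfl⟩
    · simp [ha.one]
    · rw [ha.two_mul m hm]
      linarith [ih m hmn hm]
    · rw [ha.two_mul_add_one m hm, ha.two_mul m hm]
      have := ih m hmn hm
      positivity

theorem one_lt_two_mul (ha : SuccRecipRec a) {m : ℕ} (hm : 1 ≤ m) : 1 < a (2 * m) := by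
  rw [ha.two_mul m hm]
  linarith [ha.pos hm]

theorem two_mul_add_one_lt_one (ha : SuccRecipRec a) {m : ℕ} (hm : 1 ≤ m) :
    a (2 * m + 1) < 1 := by
  rw [ha.two_mul_add_one m hm, one_div]
  exact inv_lt_one_of_one_lt₀ (ha.one_lt_two_mul hm)

theorem eq_one_of_apply_eq_one (ha : SuccRecipRec a) {n : ℕ} (hn : 1 ≤ n) (h : a n = 1) :
    n = 1 := by
  rcases Nat.eq_one_or_exists_eq_two_mul_or_two_mul_add_one hn with rfl | ⟨m, hm, -, rfl | rfl⟩
  · rfl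
  · linarith [ha.one_lt_two_mul hm]
  · linarith [ha.two_mul_add_one_lt_one hm]

theorem injOn (ha : SuccRecipRec a) : Set.InjOn a {n | 1 ≤ n} := by
  intro m hm k hk h
  induction m using Nat.strong_induction_on generalizing k with
  | _ m ih =>
    have hm : 1 ≤ m := hm
    have hk : 1 ≤ k := hk
    rcases Nat.eq_one_or_exists_eq_two_mul_or_two_mul_add_one hm with rfl | ⟨i, hi, him, rfl | rfl⟩
    · exact (ha.eq_one_of_apply_eq_one hk (h.symm.trans ha.one)).symm
    all_goals
      rcases Nat.eq_one_or_exists_eq_two_mul_or_two_mul_add_one hk with rfl | ⟨j, hj, -, rfl | rfl⟩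
    · linarith [ha.one_lt_two_mul hi, ha.one]
    · rw [ha.two_mul i hi, ha.two_mul j hj, add_left_inj] at h
      rw [ih i him hi hj h]
    · linarith [ha.one_lt_two_mul hi, ha.two_mul_add_one_lt_one hj]
    · linarith [ha.two_mul_add_one_lt_one hi, ha.one]
    · linarith [ha.two_mul_add_one_lt_one hi, ha.one_lt_two_mul hj]
    · rw [ha.two_mul_add_one i hi, ha.two_mul_add_one j hj, one_div, one_div, inv_inj,
        ha.two_mul i hi, ha.two_mul j hj, add_left_inj] at h
      rw [ih i (by omega) hi hj h]

theorem exists_apply_eq_div (ha : SuccRecipRec a) {p d : ℕ} (hp : 0 < p) (hd : 0 < d) :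
    ∃ n, 1 ≤ n ∧ a n = p / d := by
  induction hN : p + d using Nat.strong_induction_on generalizing p d with
  | _ N ih =>
    have hp0 : (p : ℚ) ≠ 0 := by positivity
    have hd0 : (d : ℚ) ≠ 0 := by positivity
    rcases lt_trichotomy p d with hpd | rfl | hdp
    · -- `p / d = 1 / ((d - p) / p + 1)`
      obtain ⟨m, hm, hmv⟩ := ih d (by omega) (p := d - p) (d := p) (by omega) hp (by omega)
      refine ⟨2 * m + 1, by omega, ?_⟩
      rw [ha.two_mul_add_one m hm, ha.two_mul m hm, hmv, Nat.cast_sub hpd.le, div_add_one hp0,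
        sub_add_cancel, one_div_div]
    · exact ⟨1, le_rfl, by rw [ha.one, div_self hp0]⟩
    · -- `p / d = (p - d) / d + 1`
      obtain ⟨m, hm, hmv⟩ := ih p (by omega) (p := p - d) (d := d) (by omega) hd (by omega)
      refine ⟨2 * m, by omega, ?_⟩
      rw [ha.two_mul m hm, hmv, Nat.cast_sub hdp.le, div_add_one hd0, sub_add_cancel]

theorem surjOn (ha : SuccRecipRec a) : Set.SurjOn a {n | 1 ≤ n} (Set.Ioi 0) := by
  intro q (hq : 0 < q)
  have hnum : 0 < q.num := Rat.num_pos.mpr hq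
  obtain ⟨n, hn, hnv⟩ := ha.exists_apply_eq_div (Int.natAbs_pos.mpr hnum.ne') q.den_pos
  refine ⟨n, hn, ?_⟩
  rw [hnv, Nat.cast_natAbs, abs_of_pos hnum, Rat.num_div_den]

theorem bijOn (ha : SuccRecipRec a) : Set.BijOn a {n | 1 ≤ n} (Set.Ioi 0) :=
  ⟨fun _ hn => ha.pos hn, ha.injOn, ha.surjOn⟩

end SuccRecipRec

theorem Set.BijOn.signedExtension {α : Type*} [AddCommGroup α] [LinearOrder α]
    [IsOrderedAddMonoid α] {a s : ℕ → α} (ha : Set.BijOn a {n | 1 ≤ n} (Set.Ioi 0))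
    (hs1 : s 1 = 0) (hs2 : ∀ n, 1 ≤ n → s (2 * n) = a n)
    (hs3 : ∀ n, 1 ≤ n → s (2 * n + 1) = -a n) :
    Set.BijOn s {n | 1 ≤ n} Set.univ := by
  have pos : ∀ {n}, 1 ≤ n → 0 < a n := fun hn => ha.mapsTo hn
  refine ⟨Set.mapsTo_univ _ _, ?_, ?_⟩
  · intro m (hm : 1 ≤ m) k (hk : 1 ≤ k) h
    rcases Nat.eq_one_or_exists_eq_two_mul_or_two_mul_add_one hm with rfl | ⟨i, hi, -, rfl | rfl⟩ <;>
      rcases Nat.eq_one_or_exists_eq_two_mul_or_two_mul_add_one hk with rfl | ⟨j, hj, -, rfl | rfl⟩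
    · rfl
    · rw [hs1, hs2 j hj] at h
      exact absurd h.symm (pos hj).ne'
    · rw [hs1, hs3 j hj, zero_eq_neg] at h
      exact absurd h (pos hj).ne'
    · rw [hs1, hs2 i hi] at h
      exact absurd h (pos hi).ne'
    · rw [hs2 i hi, hs2 j hj] at h
      rw [ha.injOn hi hj h]
    · rw [hs2 i hi, hs3 j hj] at h
      exact absurd h ((neg_lt_zero.mpr (pos hj)).trans (pos hi)).ne'
    · rw [hs1, hs3 i hi, neg_eq_zero] at h
      exact absurd h (pos hi).ne'
    · rw [hs3 i hi, hs2 j hj] at h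
      exact absurd h ((neg_lt_zero.mpr (pos hi)).trans (pos hj)).ne
    · rw [hs3 i hi, hs3 j hj, neg_inj] at h
      rw [ha.injOn hi hj h]
  · intro q _
    rcases lt_trichotomy q 0 with hq | rfl | hq
    · obtain ⟨n, hn : 1 ≤ n, hnv⟩ := ha.surjOn (neg_pos.mpr hq)
      exact ⟨2 * n + 1, by simp, by rw [hs3 n hn, hnv, neg_neg]⟩
    · exact ⟨1, le_refl 1, hs1⟩
    · obtain ⟨n, hn : 1 ≤ n, hnv⟩ := ha.surjOn hq
      exact ⟨2 * n, show 1 ≤ 2 * n by omega, by rw [hs2 n hn, hnv]⟩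

theorem stmt18 (a : ℕ → ℚ) (h1 : a 1 = 1)
    (h2 : ∀ n : ℕ, 1 ≤ n → a (2 * n) = a n + 1)
    (h3 : ∀ n : ℕ, 1 ≤ n → a (2 * n + 1) = 1 / a (2 * n))
    (s : ℕ → ℚ) (hs1 : s 1 = 0)
    (hs2 : ∀ n : ℕ, 1 ≤ n → s (2 * n) = a n)
    (hs3 : ∀ n : ℕ, 1 ≤ n → s (2 * n + 1) = - a n) :
    Set.BijOn s {n : ℕ | 1 ≤ n} (Set.univ : Set ℚ) :=
  (SuccRecipRec.bijOn ⟨h1, h2, h3⟩).signedExtension hs1 hs2 hs3
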